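/- arXiv:0904.3938 — 2 statements merged into one kernel-verified Lean document; each statement's English description precedes it below -/
import Mathlib

section
/- Let p be an odd prime, n ≥ 0, and α = Σ_{i=0}^n x_i π_i with x_i ∈ ℚ_p. Then the ℚ_p-vector space generated by the Galois conjugates {α^σ : σ ∈ Gal(ℚ_p(μ_{p^n})/ℚ_p)} equals ⊕_{i ∈ S} ℚ_p^{(i)}, where S = {i : x_i ≠ 0}. -/
/-!
The span `M` of the conjugates of `α` is stable under `Gal(K/ℚ_p)`, which acts on the tower through
all of `(ℤ/p^n)ˣ` because `Φ_{p^n}` is Eisenstein, hence irreducible over `ℚ_p`. For `1 ≤ j ≤ n`,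
the sum of the automorphisms `ζ_n ↦ ζ_n^(1 + p^j t)`, `t < p^(n-j)`, multiplies `π_i` by `p^(n-j)`
for `i ≤ j` and kills it for `i > j` (a full sum of roots of unity of order `p^(i-j)`). So every
partial sum `∑_{i ≤ j} x_i π_i` with `j ≥ 1` lies in `M`; taking the trace from `ℚ_p(ζ_p)` of the
partial sum for `j = 1` removes `x_1 π_1`, which has trace zero. Consecutive differences of the
partial sums then put each `x_i π_i` in `M`.
-/

open Polynomial

namespace PadicInt

variable (p : ℕ) [hp : Fact p.Prime]

theorem cyclotomic_prime_pow_comp_X_add_one_isEisensteinAt (m : ℕ) :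
    ((cyclotomic (p ^ (m + 1)) ℤ_[p]).comp (X + 1)).IsEisensteinAt
      (Ideal.span {(p : ℤ_[p])}) := by
  have hweak := (_root_.cyclotomic_prime_pow_comp_X_add_one_isEisensteinAt p m
    ).isWeaklyEisensteinAt.map (Int.castRingHom ℤ_[p])
  simp only [Polynomial.map_comp, map_cyclotomic, Polynomial.map_add, map_X, Polynomial.map_one,
    Ideal.submodule_span_eq, Ideal.map_span, Set.image_singleton, map_natCast] at hweak
  refine Monic.isEisensteinAt_of_mem_of_notMem ?_ ?_ hweak.mem ?_
  · simpa using (cyclotomic.monic _ ℤ_[p]).comp_X_add_C 1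
  · rw [← maximalIdeal_eq_span_p]; exact (IsLocalRing.maximalIdeal.isMaximal _).ne_top
  · rw [coeff_zero_eq_eval_zero, eval_comp, eval_add, eval_X, eval_one, zero_add,
      eval_one_cyclotomic_prime_pow, Ideal.span_singleton_pow, Ideal.mem_span_singleton, sq]
    rintro ⟨z, hz⟩
    refine prime_p.not_isUnit (IsUnit.of_mul_eq_one z ?_)
    exact mul_left_cancel₀ prime_p.ne_zero (by rw [mul_one, ← mul_assoc]; exact hz.symm)

theorem _root_.Padic.irreducible_cyclotomic_prime_pow (n : ℕ) :
    Irreducible (cyclotomic (p ^ n) ℚ_[p]) := by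
  rcases n with _ | m
  · simpa using irreducible_X_sub_C (1 : ℚ_[p])
  have hmonic : ((cyclotomic (p ^ (m + 1)) ℤ_[p]).comp (X + 1)).Monic := by
    simpa using (cyclotomic.monic _ ℤ_[p]).comp_X_add_C 1
  have hdeg : 0 < ((cyclotomic (p ^ (m + 1)) ℤ_[p]).comp (X + 1)).natDegree := by
    rw [natDegree_comp, ← C_1, natDegree_X_add_C, natDegree_cyclotomic, mul_one]
    exact Nat.totient_pos.2 (pow_pos hp.out.pos _)
  have hirr := (cyclotomic_prime_pow_comp_X_add_one_isEisensteinAt p m).irreducible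
    ((Ideal.span_singleton_prime prime_p.ne_zero).2 prime_p) hmonic.isPrimitive hdeg
  rw [hmonic.irreducible_iff_irreducible_map_fraction_map (K := ℚ_[p])] at hirr
  rw [← MulEquiv.irreducible_iff (taylorEquiv (1 : ℚ_[p]))]
  change Irreducible (taylor 1 _)
  simpa [taylor_apply, Polynomial.map_comp] using hirr

end PadicInt

section ConjugateSpan

variable (F : Type*) {L : Type*} [CommRing F] [Ring L] [Algebra F L]

def conjugateSpan (a : L) : Submodule F L :=
  Submodule.span F {y | ∃ σ : L ≃ₐ[F] L, y = σ a}

variable {F}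

theorem algEquiv_apply_mem_conjugateSpan (σ : L ≃ₐ[F] L) (a : L) : σ a ∈ conjugateSpan F a :=
  Submodule.subset_span ⟨σ, rfl⟩

theorem mem_conjugateSpan_self (a : L) : a ∈ conjugateSpan F a :=
  algEquiv_apply_mem_conjugateSpan AlgEquiv.refl a

theorem algEquiv_apply_mem_conjugateSpan_of_mem {a y : L} (hy : y ∈ conjugateSpan F a)
    (τ : L ≃ₐ[F] L) : τ y ∈ conjugateSpan F a := by
  refine Submodule.span_mono ?_ (Submodule.apply_mem_span_image_of_mem_span τ.toLinearMap hy)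
  rintro _ ⟨_, ⟨σ, rfl⟩, rfl⟩
  exact ⟨σ.trans τ, rfl⟩

theorem conjugateSpan_le_of_mem {a b : L} (h : b ∈ conjugateSpan F a) :
    conjugateSpan F b ≤ conjugateSpan F a :=
  Submodule.span_le.2 fun _ ⟨σ, hσ⟩ => hσ ▸ algEquiv_apply_mem_conjugateSpan_of_mem h σ

theorem conjugateSpan_sum_smul_le {ι : Type*} (s : Finset ι) (x : ι → F) (a : ι → L) :
    conjugateSpan F (∑ i ∈ s, x i • a i) ≤ ⨆ i ∈ s, ⨆ _ : x i ≠ 0, conjugateSpan F (a i) := by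
  refine Submodule.span_le.2 ?_
  rintro _ ⟨σ, rfl⟩
  rw [SetLike.mem_coe, map_sum]
  refine Submodule.sum_mem _ fun i hi => ?_
  rw [map_smul]
  by_cases hxi : x i = 0
  · simp [hxi]
  · exact Submodule.smul_mem _ _ (Submodule.mem_iSup_of_mem i (Submodule.mem_iSup_of_mem hi
      (Submodule.mem_iSup_of_mem hxi (algEquiv_apply_mem_conjugateSpan σ (a i)))))

end ConjugateSpan

theorem IsPrimitiveRoot.sum_range_pow_mul {R : Type*} [CommRing R] [IsDomain R] {ω : R}
    {k d N : ℕ} (hω : IsPrimitiveRoot ω k) (h : k ∣ d * N) :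
    ∑ t ∈ Finset.range N, ω ^ (d * t) = if k ∣ d then (N : R) else 0 := by
  simp only [pow_mul]
  split_ifs with hkd
  · simp [(hω.pow_eq_one_iff_dvd d).2 hkd]
  · have hne : 1 - ω ^ d ≠ 0 := sub_ne_zero.2 (Ne.symm (mt (hω.pow_eq_one_iff_dvd d).1 hkd))
    refine eq_zero_of_ne_zero_of_mul_left_eq_zero hne ?_
    rw [mul_neg_geom_sum, ← pow_mul, (hω.pow_eq_one_iff_dvd _).2 h, sub_self]

theorem exists_algEquiv_apply_eq_pow {F L : Type*} [Field F] [Field L] [Algebra F L]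
    [Normal F L] {k : ℕ} [NeZero (k : F)] (hirr : Irreducible (cyclotomic k F)) {ζ : L}
    (hζ : IsPrimitiveRoot ζ k) {m : ℕ} (hm : m.Coprime k) : ∃ σ : L ≃ₐ[F] L, σ ζ = ζ ^ m := by
  have := NeZero.of_faithfulSMul F L k
  refine minpoly.exists_algEquiv_of_root' (Algebra.IsAlgebraic.isAlgebraic ζ) ?_
  rw [← hζ.minpoly_eq_cyclotomic_of_irreducible hirr, aeval_def, eval₂_eq_eval_map,
    map_cyclotomic]
  exact isRoot_cyclotomic_iff.2 (hζ.pow_of_coprime m hm)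

theorem pow_pow_sub_of_pow_succ {M : Type*} [Monoid M] {p : ℕ} {ζ : ℕ → M}
    (hcompat : ∀ n, ζ (n + 1) ^ p = ζ n) {i n : ℕ} (hin : i ≤ n) : ζ n ^ p ^ (n - i) = ζ i := by
  obtain ⟨k, rfl⟩ := Nat.exists_eq_add_of_le hin
  rw [Nat.add_sub_cancel_left]
  induction k with
  | zero => simp
  | succ k ih => rw [← add_assoc, pow_succ', pow_mul, hcompat, ih (by omega)]

/-- The shift by `1 / (p - 1)` makes `π_1` trace-free over `ℚ_p`. -/
noncomputable def cyclotomicPi (p : ℕ) [Fact p.Prime] {K : Type*} [Field K] [Algebra ℚ_[p] K]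
    (ζ : ℕ → K) : ℕ → K
  | 0 => 1
  | 1 => ζ 1 + algebraMap ℚ_[p] K ((p - 1 : ℚ_[p])⁻¹)
  | i + 2 => ζ (i + 2)

section Tower

variable {p : ℕ} [Fact p.Prime] {K : Type*} [Field K] [Algebra ℚ_[p] K] {ζ : ℕ → K}

@[simp]
theorem cyclotomicPi_zero : cyclotomicPi p ζ 0 = 1 := rfl

theorem exists_algEquiv_apply_eq_pow_of_le [Normal ℚ_[p] K] {n : ℕ}
    (hζ : IsPrimitiveRoot (ζ n) (p ^ n)) (hcompat : ∀ n, ζ (n + 1) ^ p = ζ n) {m : ℕ}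
    (hm : ¬ p ∣ m) : ∃ σ : K ≃ₐ[ℚ_[p]] K, ∀ i ≤ n, σ (ζ i) = ζ i ^ m := by
  have hcop : m.Coprime (p ^ n) :=
    ((Nat.Prime.coprime_iff_not_dvd Fact.out).2 hm).symm.pow_right n
  obtain ⟨σ, hσ⟩ := exists_algEquiv_apply_eq_pow (Padic.irreducible_cyclotomic_prime_pow p n)
    hζ hcop
  refine ⟨σ, fun i hi => ?_⟩
  rw [← pow_pow_sub_of_pow_succ hcompat hi, map_pow, hσ, ← pow_mul, ← pow_mul, mul_comm]

theorem sum_algEquiv_apply_root_eq_ite (hζ : ∀ n, IsPrimitiveRoot (ζ n) (p ^ n)) {n j : ℕ}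
    (hjn : j ≤ n) {σ : ℕ → K ≃ₐ[ℚ_[p]] K} (hσ : ∀ t, ∀ i ≤ n, σ t (ζ i) = ζ i ^ (1 + p ^ j * t))
    {i : ℕ} (hin : i ≤ n) :
    ∑ t ∈ Finset.range (p ^ (n - j)), σ t (ζ i) =
      if i ≤ j then (p ^ (n - j) : ℕ) * ζ i else 0 := by
  have hp : 1 < p := (Fact.out : p.Prime).one_lt
  have hdvd : p ^ i ∣ p ^ j * p ^ (n - j) := by
    rw [← pow_add, Nat.add_sub_cancel' hjn]; exact pow_dvd_pow p hin
  simp only [Finset.sum_congr rfl fun t _ => hσ t i hin, pow_add, pow_one, ← Finset.mul_sum,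
    (hζ i).sum_range_pow_mul hdvd, Nat.pow_dvd_pow_iff_le_right hp]
  split_ifs <;> ring

theorem sum_algEquiv_apply_cyclotomicPi_eq_ite (hζ : ∀ n, IsPrimitiveRoot (ζ n) (p ^ n)) {n j : ℕ}
    (hj : 1 ≤ j) (hjn : j ≤ n) {σ : ℕ → K ≃ₐ[ℚ_[p]] K}
    (hσ : ∀ t, ∀ i ≤ n, σ t (ζ i) = ζ i ^ (1 + p ^ j * t)) {i : ℕ} (hin : i ≤ n) :
    ∑ t ∈ Finset.range (p ^ (n - j)), σ t (cyclotomicPi p ζ i) =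
      if i ≤ j then (p ^ (n - j) : ℕ) * cyclotomicPi p ζ i else 0 := by
  match i with
  | 0 => simp [cyclotomicPi]
  | 1 =>
    simp only [cyclotomicPi, map_add, AlgEquiv.commutes, Finset.sum_add_distrib,
      sum_algEquiv_apply_root_eq_ite hζ hjn hσ hin, if_pos hj, Finset.sum_const, Finset.card_range,
      nsmul_eq_mul, mul_add]
  | i + 2 => exact sum_algEquiv_apply_root_eq_ite hζ hjn hσ hin

theorem sum_range_smul_cyclotomicPi_mem_of_one_le [Normal ℚ_[p] K]
    (hζ : ∀ n, IsPrimitiveRoot (ζ n) (p ^ n)) (hcompat : ∀ n, ζ (n + 1) ^ p = ζ n)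
    (x : ℕ → ℚ_[p]) {n j : ℕ} (hj : 1 ≤ j) (hjn : j ≤ n) :
    ∑ i ∈ Finset.range (j + 1), x i • cyclotomicPi p ζ i ∈
      conjugateSpan ℚ_[p] (∑ i ∈ Finset.range (n + 1), x i • cyclotomicPi p ζ i) := by
  have hp : p.Prime := Fact.out
  have hunit (t : ℕ) : ¬ p ∣ 1 + p ^ j * t := fun h => hp.one_lt.ne' <| Nat.dvd_one.1 <|
    (Nat.dvd_add_left (dvd_mul_of_dvd_left (dvd_pow_self p (by omega)) t)).1 h
  choose σ hσ using fun t => exists_algEquiv_apply_eq_pow_of_le (hζ n) hcompat (hunit t)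
  have hmem := Submodule.sum_mem _ fun t (_ : t ∈ Finset.range (p ^ (n - j))) =>
    algEquiv_apply_mem_conjugateSpan (σ t) (∑ i ∈ Finset.range (n + 1), x i • cyclotomicPi p ζ i)
  have hfilter : (Finset.range (n + 1)).filter (· ≤ j) = Finset.range (j + 1) := by
    ext i; simp only [Finset.mem_filter, Finset.mem_range]; omega
  have htrace : ∑ t ∈ Finset.range (p ^ (n - j)),
      σ t (∑ i ∈ Finset.range (n + 1), x i • cyclotomicPi p ζ i) =
        (p : ℚ_[p]) ^ (n - j) • ∑ i ∈ Finset.range (j + 1), x i • cyclotomicPi p ζ i := by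
    simp only [map_sum, map_smul]
    rw [Finset.sum_comm]
    rw [Finset.sum_congr rfl fun i hi => by
      rw [← Finset.smul_sum, sum_algEquiv_apply_cyclotomicPi_eq_ite hζ hj hjn hσ
        (Nat.lt_succ_iff.1 (Finset.mem_range.1 hi)), smul_ite, smul_zero]]
    rw [← Finset.sum_filter, hfilter, Finset.smul_sum]
    refine Finset.sum_congr rfl fun i _ => ?_
    rw [smul_comm, Algebra.smul_def ((p : ℚ_[p]) ^ (n - j))]
    simp
  rwa [htrace, Submodule.smul_mem_iff _ (pow_ne_zero _ (Nat.cast_ne_zero.2 hp.ne_zero))] at hmem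

theorem sum_algEquiv_apply_cyclotomicPi_one_eq_zero (hζ : IsPrimitiveRoot (ζ 1) p)
    {σ : ℕ → K ≃ₐ[ℚ_[p]] K} (hσ : ∀ b < p - 1, σ b (ζ 1) = ζ 1 ^ (b + 1)) :
    ∑ b ∈ Finset.range (p - 1), σ b (cyclotomicPi p ζ 1) = 0 := by
  have hp : p.Prime := Fact.out
  have hroots : ∑ b ∈ Finset.range (p - 1), σ b (ζ 1) = -1 := by
    have hgeom := hζ.geom_sum_eq_zero hp.one_lt
    rw [← Nat.sub_add_cancel hp.one_le, Finset.sum_range_succ', pow_zero,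
      ← eq_neg_iff_add_eq_zero] at hgeom
    rw [← hgeom]
    exact Finset.sum_congr rfl fun b hb => hσ b (Finset.mem_range.1 hb)
  have hp1 : (p - 1 : ℚ_[p]) ≠ 0 := sub_ne_zero.2 (Nat.cast_ne_one.2 hp.ne_one)
  have hshift : (p - 1) • algebraMap ℚ_[p] K (p - 1 : ℚ_[p])⁻¹ = 1 := by
    rw [← map_nsmul, nsmul_eq_mul, Nat.cast_sub hp.one_le, Nat.cast_one, mul_inv_cancel₀ hp1,
      map_one]
  simp only [cyclotomicPi, map_add, AlgEquiv.commutes, Finset.sum_add_distrib, hroots,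
    Finset.sum_const, Finset.card_range, hshift, neg_add_cancel]

theorem smul_cyclotomicPi_zero_mem_of_add_mem [Normal ℚ_[p] K] (hζ : IsPrimitiveRoot (ζ 1) p)
    {a : K} {x₀ x₁ : ℚ_[p]}
    (h : x₀ • cyclotomicPi p ζ 0 + x₁ • cyclotomicPi p ζ 1 ∈ conjugateSpan ℚ_[p] a) :
    x₀ • cyclotomicPi p ζ 0 ∈ conjugateSpan ℚ_[p] a := by
  have hp : p.Prime := Fact.out
  have hexists (b : ℕ) : ∃ σ : K ≃ₐ[ℚ_[p]] K, b < p - 1 → σ (ζ 1) = ζ 1 ^ (b + 1) := by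
    by_cases hb : b < p - 1
    · have hcop : (b + 1).Coprime p := ((Nat.Prime.coprime_iff_not_dvd hp).2
        (Nat.not_dvd_of_pos_of_lt b.succ_pos (by omega))).symm
      obtain ⟨σ, hσ⟩ := exists_algEquiv_apply_eq_pow
        (by simpa using Padic.irreducible_cyclotomic_prime_pow p 1) hζ hcop
      exact ⟨σ, fun _ => hσ⟩
    · exact ⟨AlgEquiv.refl, fun h => absurd h hb⟩
  choose σ hσ using hexists
  have hmem := Submodule.sum_mem _ fun b (_ : b ∈ Finset.range (p - 1)) =>
    algEquiv_apply_mem_conjugateSpan_of_mem h (σ b)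
  have hp1 : ((p - 1 : ℕ) : ℚ_[p]) ≠ 0 := Nat.cast_ne_zero.2 (by have := hp.two_le; omega)
  simp only [map_add, map_smul, cyclotomicPi_zero, map_one, Finset.sum_add_distrib,
    ← Finset.smul_sum, sum_algEquiv_apply_cyclotomicPi_one_eq_zero hζ hσ, smul_zero,
    add_zero] at hmem
  rw [cyclotomicPi_zero]
  rwa [Finset.sum_const, Finset.card_range, ← Nat.cast_smul_eq_nsmul ℚ_[p], smul_comm,
    Submodule.smul_mem_iff _ hp1] at hmem

theorem sum_range_smul_cyclotomicPi_mem [Normal ℚ_[p] K]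
    (hζ : ∀ n, IsPrimitiveRoot (ζ n) (p ^ n)) (hcompat : ∀ n, ζ (n + 1) ^ p = ζ n)
    (x : ℕ → ℚ_[p]) {n j : ℕ} (hjn : j ≤ n) :
    ∑ i ∈ Finset.range (j + 1), x i • cyclotomicPi p ζ i ∈
      conjugateSpan ℚ_[p] (∑ i ∈ Finset.range (n + 1), x i • cyclotomicPi p ζ i) := by
  rcases Nat.eq_zero_or_pos j with rfl | hj
  · rcases Nat.eq_zero_or_pos n with rfl | hn
    · exact mem_conjugateSpan_self _
    · have h₁ := sum_range_smul_cyclotomicPi_mem_of_one_le hζ hcompat x le_rfl hn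
      rw [Finset.sum_range_succ _ 1, Finset.sum_range_one] at h₁
      rw [zero_add, Finset.sum_range_one]
      exact smul_cyclotomicPi_zero_mem_of_add_mem (by simpa using hζ 1) h₁
  · exact sum_range_smul_cyclotomicPi_mem_of_one_le hζ hcompat x hj hjn

theorem smul_cyclotomicPi_mem [Normal ℚ_[p] K]
    (hζ : ∀ n, IsPrimitiveRoot (ζ n) (p ^ n)) (hcompat : ∀ n, ζ (n + 1) ^ p = ζ n)
    (x : ℕ → ℚ_[p]) {n i : ℕ} (hin : i ≤ n) :
    x i • cyclotomicPi p ζ i ∈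
      conjugateSpan ℚ_[p] (∑ i ∈ Finset.range (n + 1), x i • cyclotomicPi p ζ i) := by
  cases i with
  | zero => simpa using sum_range_smul_cyclotomicPi_mem hζ hcompat x hin
  | succ i =>
    have h := Submodule.sub_mem _ (sum_range_smul_cyclotomicPi_mem hζ hcompat x hin)
      (sum_range_smul_cyclotomicPi_mem hζ hcompat x (j := i) (by omega))
    rwa [Finset.sum_range_succ _ (i + 1), add_sub_cancel_left] at h

end Tower

theorem span_conjugates_of_combination_general (p : ℕ) [Fact p.Prime]
    (K : Type*) [Field K] [Algebra ℚ_[p] K] [IsAlgClosed K] [Algebra.IsAlgebraic ℚ_[p] K]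
    (ζ : ℕ → K)
    (hζ : ∀ n, IsPrimitiveRoot (ζ n) (p ^ n))
    (hcompat : ∀ n, ζ (n + 1) ^ p = ζ n)
    (π : ℕ → K)
    (hπ0 : π 0 = 1)
    (hπ1 : π 1 = ζ 1 + algebraMap ℚ_[p] K ((p - 1 : ℚ_[p])⁻¹))
    (hπ : ∀ n, 1 < n → π n = ζ n)
    (n : ℕ) (x : ℕ → ℚ_[p])
    (α : K) (hα : α = ∑ i ∈ Finset.range (n + 1), x i • π i) :
    Submodule.span ℚ_[p] {y : K | ∃ σ : K ≃ₐ[ℚ_[p]] K, y = σ α} =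
      ⨆ i ∈ Finset.range (n + 1), ⨆ _ : x i ≠ 0,
        Submodule.span ℚ_[p] {y : K | ∃ σ : K ≃ₐ[ℚ_[p]] K, y = σ (π i)} := by
  have : IsAlgClosure ℚ_[p] K := ⟨inferInstance, inferInstance⟩
  obtain rfl : π = cyclotomicPi p ζ := funext fun
    | 0 => hπ0
    | 1 => hπ1
    | i + 2 => hπ (i + 2) (by omega)
  subst hα
  refine le_antisymm (conjugateSpan_sum_smul_le _ x _)
    (iSup₂_le fun i hi => iSup_le fun hxi => conjugateSpan_le_of_mem ?_)
  rw [← Submodule.smul_mem_iff _ hxi]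
  exact smul_cyclotomicPi_mem hζ hcompat x (Finset.mem_range_succ_iff.1 hi)

/-- For `α = Σ_{i=0}^n x_i π_i` with `x_i ∈ ℚ_p`, the `ℚ_p`-span of the
Galois conjugates of `α` equals `⊕_{i ∈ S} ℚ_p^{(i)}` where `S = {i : x_i ≠ 0}` and
`ℚ_p^{(i)}` is the `ℚ_p`-span of the Galois conjugates of `π i`. -/
theorem span_conjugates_of_combination (p : ℕ) [Fact p.Prime] (hodd : Odd p)
    (K : Type*) [Field K] [Algebra ℚ_[p] K] [IsAlgClosed K] [Algebra.IsAlgebraic ℚ_[p] K]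
    (ζ : ℕ → K)
    (hζ : ∀ n, IsPrimitiveRoot (ζ n) (p ^ n))
    (hcompat : ∀ n, ζ (n + 1) ^ p = ζ n)
    (π : ℕ → K)
    (hπ0 : π 0 = 1)
    (hπ1 : π 1 = ζ 1 + algebraMap ℚ_[p] K ((p - 1 : ℚ_[p])⁻¹))
    (hπ : ∀ n, 1 < n → π n = ζ n)
    (n : ℕ) (x : ℕ → ℚ_[p])
    (α : K) (hα : α = ∑ i ∈ Finset.range (n + 1), x i • π i) :
    Submodule.span ℚ_[p] {y : K | ∃ σ : K ≃ₐ[ℚ_[p]] K, y = σ α} =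
      ⨆ i ∈ Finset.range (n + 1), ⨆ _ : x i ≠ 0,
        Submodule.span ℚ_[p] {y : K | ∃ σ : K ≃ₐ[ℚ_[p]] K, y = σ (π i)} :=
  span_conjugates_of_combination_general p K ζ hζ hcompat π hπ0 hπ1 hπ n x α hα
end

section
/- Let p be an odd prime and m ≥ 2. The ℚ_p-dimension of the ℚ_p-span of the Galois conjugates of ζ_{p^m} (a primitive p^m-th root of unity) inside ℚ_p(μ_{p^m}) equals dim_{ℚ_p} ℚ_p(μ_{p^m}) − dim_{ℚ_p} ℚ_p(μ_{p^{m-1}}) = p^{m-2}(p-1)^2. -/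
/-!
Since `cyclotomic (p ^ m)` is Eisenstein at `p` after the shift `X ↦ X + 1`, it stays irreducible
over `ℚ_[p]`, so the conjugates of `ζ = ζ_{p^m}` are exactly the primitive `p ^ m`-th roots of
unity `ζ ^ a`, `p ∤ a`. With `q = p ^ (m - 1)`, the powers `ζ ^ a` with `a < φ(p ^ m) = (p - 1) q`
are linearly independent, and the remaining primitive ones, `ζ ^ (b + (p - 1) q)` with `b < q`,
are eliminated by `∑_{c < p} ζ ^ (b + c q) = 0`, as `ζ ^ q` is a primitive `p`-th root of unity.
Hence the span has the basis `ζ ^ a`, `a < (p - 1) q`, `p ∤ a`, of size `(p - 1) (q - q / p)`.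
-/

open IntermediateField Polynomial Finset

theorem Nat.card_filter_not_dvd_range_mul {p : ℕ} (hp : 0 < p) (j : ℕ) :
    #{a ∈ range (p * j) | ¬ p ∣ a} = (p - 1) * j := by
  have hdvd : {a ∈ range (p * j) | p ∣ a} =
      (range j).map ⟨(p * ·), mul_right_injective₀ hp.ne'⟩ := by
    ext a
    simp only [mem_filter, mem_range, mem_map, Function.Embedding.coeFn_mk]
    constructor
    · rintro ⟨ha, b, rfl⟩
      exact ⟨b, (Nat.mul_lt_mul_left hp).mp ha, rfl⟩
    · rintro ⟨b, hb, rfl⟩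
      exact ⟨(Nat.mul_lt_mul_left hp).mpr hb, dvd_mul_right p b⟩
  have hsplit := card_filter_add_card_filter_not (s := range (p * j)) (p ∣ ·)
  rw [hdvd, card_map, card_range, card_range] at hsplit
  rw [Nat.sub_one_mul]
  omega

theorem Nat.totient_prime_pow_add_two_sub {p : ℕ} (hp : p.Prime) (k : ℕ) :
    (p ^ (k + 2)).totient - (p ^ (k + 1)).totient = p ^ k * (p - 1) ^ 2 := by
  rw [Nat.totient_prime_pow_succ hp, Nat.totient_prime_pow_succ hp, pow_succ, mul_right_comm,
    ← Nat.mul_sub_one, sq, mul_assoc]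

theorem Polynomial.irreducible_cyclotomic_prime_pow_of_prime {R : Type*} [CommRing R]
    [IsDomain R] {p : ℕ} [Fact p.Prime] (hp : Prime (p : R)) (k : ℕ) :
    Irreducible (cyclotomic (p ^ (k + 1)) R) := by
  set f := cyclotomic (p ^ (k + 1)) R
  have hmonic : (f.comp (X + C 1)).Monic := (cyclotomic.monic _ R).comp_X_add_C 1
  have hmap : f.comp (X + C 1) =
      ((cyclotomic (p ^ (k + 1)) ℤ).comp (X + 1)).map (Int.castRingHom R) := by
    simp [f, Polynomial.map_comp]
  have hideal : (Ideal.span {(p : ℤ)}).map (Int.castRingHom R) = Ideal.span {(p : R)} := by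
    simp [Ideal.map_span]
  have hE : (f.comp (X + C 1)).IsEisensteinAt (Ideal.span {(p : R)}) := by
    refine hmonic.isEisensteinAt_of_mem_of_notMem ?_ (fun hn => ?_) ?_
    · exact (Ideal.span_singleton_prime hp.ne_zero).mpr hp |>.ne_top
    · rw [hmap] at hn ⊢
      rw [← hideal]
      exact ((cyclotomic_prime_pow_comp_X_add_one_isEisensteinAt p k).isWeaklyEisensteinAt.map
        _).mem hn
    · rw [coeff_zero_eq_eval_zero, eval_comp, eval_add, eval_X, eval_C, zero_add,
        eval_one_cyclotomic_prime_pow, Ideal.span_singleton_pow, Ideal.mem_span_singleton, sq]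
      exact fun h => hp.not_dvd_one ((mul_dvd_mul_iff_left hp.ne_zero).mp (by simpa using h))
  have hdeg : 0 < (f.comp (X + C 1)).natDegree := by
    rw [natDegree_comp, natDegree_X_add_C, mul_one, natDegree_cyclotomic]
    exact Nat.totient_pos.mpr (pow_pos (Fact.out : p.Prime).pos _)
  have := hE.irreducible ((Ideal.span_singleton_prime hp.ne_zero).mpr hp) hmonic.isPrimitive hdeg
  exact (MulEquiv.irreducible_iff (taylorEquiv (1 : R))).mp this

theorem Polynomial.irreducible_cyclotomic_prime_pow_padic (p : ℕ) [Fact p.Prime] (k : ℕ) :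
    Irreducible (cyclotomic (p ^ k) ℚ_[p]) := by
  cases k with
  | zero => simpa using irreducible_X_sub_C (1 : ℚ_[p])
  | succ k =>
    rw [← map_cyclotomic _ (algebraMap ℤ_[p] ℚ_[p])]
    exact (cyclotomic.monic _ _).irreducible_iff_irreducible_map_fraction_map.mp
      (irreducible_cyclotomic_prime_pow_of_prime PadicInt.prime_p k)

namespace IsPrimitiveRoot

variable {F K : Type*} [Field F] [Field K] [Algebra F K] {ζ : K} {n : ℕ}

theorem conjugates_eq_setOf_isPrimitiveRoot [Normal F K] [NeZero (n : F)]
    (hζ : IsPrimitiveRoot ζ n) (hirr : Irreducible (cyclotomic n F)) :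
    {y : K | ∃ σ : K ≃ₐ[F] K, y = σ ζ} = {y | IsPrimitiveRoot y n} := by
  ext y
  refine ⟨fun ⟨σ, hσ⟩ => hσ ▸ hζ.map_of_injective σ.injective, fun hy => ?_⟩
  have hmin : minpoly F y = minpoly F ζ := by
    rw [← hy.minpoly_eq_cyclotomic_of_irreducible hirr,
      ← hζ.minpoly_eq_cyclotomic_of_irreducible hirr]
  obtain ⟨σ, hσ⟩ := (Normal.minpoly_eq_iff_mem_orbit K).mp hmin
  exact ⟨σ, hσ.symm⟩

theorem natDegree_minpoly [NeZero (n : F)] (hζ : IsPrimitiveRoot ζ n)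
    (hirr : Irreducible (cyclotomic n F)) : (minpoly F ζ).natDegree = n.totient := by
  rw [← hζ.minpoly_eq_cyclotomic_of_irreducible hirr, natDegree_cyclotomic]

theorem finrank_adjoin [NeZero (n : F)] (hζ : IsPrimitiveRoot ζ n)
    (hirr : Irreducible (cyclotomic n F)) : Module.finrank F F⟮ζ⟯ = n.totient := by
  have hint : IsIntegral F ζ := minpoly.ne_zero_iff.mp
    (hζ.minpoly_eq_cyclotomic_of_irreducible hirr ▸ (cyclotomic.monic n F).ne_zero)
  rw [adjoin.finrank hint, hζ.natDegree_minpoly hirr]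

theorem linearIndependent_pow_of_lt_totient [NeZero (n : F)] (hζ : IsPrimitiveRoot ζ n)
    (hirr : Irreducible (cyclotomic n F)) {S : Finset ℕ} (hS : ∀ a ∈ S, a < n.totient) :
    LinearIndependent F (fun a : S => ζ ^ (a : ℕ)) :=
  (linearIndependent_pow ζ).comp (fun a : S => ⟨a, hζ.natDegree_minpoly hirr ▸ hS a.1 a.2⟩)
    fun _ _ h => Subtype.ext (Fin.ext_iff.mp h)

theorem sum_pow_add_mul_eq_zero {p q : ℕ} (h : IsPrimitiveRoot (ζ ^ q) p) (hp : 1 < p) (b : ℕ) :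
    ∑ c ∈ range p, ζ ^ (b + c * q) = 0 := by
  simp_rw [pow_add, mul_comm _ q, pow_mul, ← mul_sum, h.geom_sum_eq_zero hp, mul_zero]

theorem span_setOf_isPrimitiveRoot_prime_pow {p k : ℕ} (hp : p.Prime)
    (hζ : IsPrimitiveRoot ζ (p ^ (k + 2))) :
    Submodule.span F {y : K | IsPrimitiveRoot y (p ^ (k + 2))} =
      Submodule.span F (Set.range fun a : ({a ∈ range (p ^ (k + 2)).totient | ¬ p ∣ a} :
        Finset ℕ) => ζ ^ (a : ℕ)) := by
  have : NeZero (p ^ (k + 2)) := ⟨pow_ne_zero _ hp.ne_zero⟩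
  set q := p ^ (k + 1) with hq
  have hpq : p ∣ q := dvd_pow_self p k.succ_ne_zero
  have htot : (p ^ (k + 2)).totient = (p - 1) * q := by
    rw [Nat.totient_prime_pow_succ hp, mul_comm]
  have hN : p ^ (k + 2) = (p - 1) * q + q := by
    rw [← Nat.succ_mul, Nat.succ_eq_add_one, Nat.sub_add_cancel hp.one_le, hq, ← pow_succ']
  set V := Submodule.span F (Set.range fun a : ({a ∈ range (p ^ (k + 2)).totient | ¬ p ∣ a} :
    Finset ℕ) => ζ ^ (a : ℕ))
  have hmem {a : ℕ} (ha : a < (p - 1) * q) (hpa : ¬ p ∣ a) : ζ ^ a ∈ V :=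
    Submodule.subset_span ⟨⟨a, mem_filter.mpr ⟨mem_range.mpr (htot ▸ ha), hpa⟩⟩, rfl⟩
  refine le_antisymm (Submodule.span_le.mpr fun y hy => ?_) (Submodule.span_le.mpr ?_)
  · obtain ⟨a, ha, rfl⟩ := hζ.eq_pow_of_pow_eq_one hy.pow_eq_one
    have hcop : a.Coprime p :=
      (Nat.coprime_pow_right_iff (by omega) _ _).mp ((hζ.pow_iff_coprime (NeZero.pos _) a).mp hy)
    have hpa : ¬ p ∣ a := hp.coprime_iff_not_dvd.mp hcop.symm
    by_cases haφ : a < (p - 1) * q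
    · exact hmem haφ hpa
    obtain ⟨b, rfl⟩ : ∃ b, a = b + (p - 1) * q := ⟨a - (p - 1) * q, by omega⟩
    have hpb : ¬ p ∣ b := fun h => hpa (dvd_add h (hpq.mul_left _))
    have hsum := (hζ.pow (a := q) (NeZero.pos _) (by rw [hq, ← pow_succ])).sum_pow_add_mul_eq_zero
      hp.one_lt b
    rw [← Nat.sub_add_cancel hp.one_le, sum_range_succ] at hsum
    rw [eq_neg_of_add_eq_zero_right hsum]
    refine neg_mem (Submodule.sum_mem _ fun c hc => hmem ?_ fun h => hpb ?_)
    · have hc : c + 1 ≤ p - 1 := mem_range.mp hc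
      nlinarith
    · exact (Nat.dvd_add_left (hpq.mul_left c)).mp h
  · rintro _ ⟨a, rfl⟩
    exact Submodule.subset_span
      (hζ.pow_of_coprime a (hp.coprime_pow_of_not_dvd (mem_filter.mp a.2).2))

theorem finrank_span_setOf_isPrimitiveRoot_prime_pow {p k : ℕ} (hp : p.Prime)
    [NeZero ((p ^ (k + 2) : ℕ) : F)] (hζ : IsPrimitiveRoot ζ (p ^ (k + 2)))
    (hirr : Irreducible (cyclotomic (p ^ (k + 2)) F)) :
    Module.finrank F (Submodule.span F {y : K | IsPrimitiveRoot y (p ^ (k + 2))}) =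
      p ^ k * (p - 1) ^ 2 := by
  rw [hζ.span_setOf_isPrimitiveRoot_prime_pow hp, finrank_span_eq_card
    (hζ.linearIndependent_pow_of_lt_totient hirr fun a ha => mem_range.mp (mem_filter.mp ha).1),
    Fintype.card_coe, Nat.totient_prime_pow_succ hp,
    show p ^ (k + 1) * (p - 1) = p * (p ^ k * (p - 1)) by ring,
    Nat.card_filter_not_dvd_range_mul hp.pos]
  ring

end IsPrimitiveRoot

theorem dim_span_conjugates_zeta_general (p : ℕ) [Fact p.Prime]
    (K : Type*) [Field K] [Algebra ℚ_[p] K] [IsAlgClosed K] [Algebra.IsAlgebraic ℚ_[p] K]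
    (ζ : ℕ → K)
    (hζ : ∀ k, IsPrimitiveRoot (ζ k) (p ^ k))
    (m : ℕ) (hm : 2 ≤ m) :
    Module.finrank ℚ_[p]
        ↥(Submodule.span ℚ_[p] {y : K | ∃ σ : K ≃ₐ[ℚ_[p]] K, y = σ (ζ m)}) =
      Module.finrank ℚ_[p] ↥(adjoin ℚ_[p] ({ζ m} : Set K)) -
        Module.finrank ℚ_[p] ↥(adjoin ℚ_[p] ({ζ (m - 1)} : Set K)) ∧
    Module.finrank ℚ_[p]
        ↥(Submodule.span ℚ_[p] {y : K | ∃ σ : K ≃ₐ[ℚ_[p]] K, y = σ (ζ m)}) =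
      p ^ (m - 2) * (p - 1) ^ 2 := by
  have : IsAlgClosure ℚ_[p] K := ⟨‹_›, ‹_›⟩
  have hp : p.Prime := Fact.out
  have hirr := irreducible_cyclotomic_prime_pow_padic p
  obtain ⟨k, rfl⟩ : ∃ k, m = k + 2 := ⟨m - 2, by omega⟩
  rw [(hζ _).conjugates_eq_setOf_isPrimitiveRoot (hirr _),
    (hζ _).finrank_span_setOf_isPrimitiveRoot_prime_pow hp (hirr _),
    (hζ _).finrank_adjoin (hirr _), (hζ _).finrank_adjoin (hirr _), Nat.add_sub_cancel,
    show k + 2 - 1 = k + 1 from rfl, Nat.totient_prime_pow_add_two_sub hp]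
  exact ⟨rfl, rfl⟩

/-- For `m ≥ 2`, the `ℚ_p`-span of the Galois conjugates of `ζ_{p^m}`
has dimension `[ℚ_p(μ_{p^m}) : ℚ_p] − [ℚ_p(μ_{p^{m-1}}) : ℚ_p] = p^{m-2}(p-1)²`. -/
theorem dim_span_conjugates_zeta (p : ℕ) [Fact p.Prime] (hodd : Odd p)
    (K : Type*) [Field K] [Algebra ℚ_[p] K] [IsAlgClosed K] [Algebra.IsAlgebraic ℚ_[p] K]
    (ζ : ℕ → K)
    (hζ : ∀ k, IsPrimitiveRoot (ζ k) (p ^ k))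
    (hcompat : ∀ k, ζ (k + 1) ^ p = ζ k)
    (m : ℕ) (hm : 2 ≤ m) :
    Module.finrank ℚ_[p]
        ↥(Submodule.span ℚ_[p] {y : K | ∃ σ : K ≃ₐ[ℚ_[p]] K, y = σ (ζ m)}) =
      Module.finrank ℚ_[p] ↥(adjoin ℚ_[p] ({ζ m} : Set K)) -
        Module.finrank ℚ_[p] ↥(adjoin ℚ_[p] ({ζ (m - 1)} : Set K)) ∧
    Module.finrank ℚ_[p]
        ↥(Submodule.span ℚ_[p] {y : K | ∃ σ : K ≃ₐ[ℚ_[p]] K, y = σ (ζ m)}) =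
      p ^ (m - 2) * (p - 1) ^ 2 :=
  dim_span_conjugates_zeta_general p K ζ hζ m hm
end
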